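/- arXiv:2505.20009 — 4 statements merged into one kernel-verified Lean document; each statement's English description precedes it below -/
import Mathlib

section
/- Projection correctness: for every valuation v, every atom a, and every closed subatomic formula F, eval_v(F) equals eval_v of the left a-projection of F if v(a) = false, and equals eval_v of the right a-projection of F if v(a) = true. -/
inductive SF (A : Type) : Type
  | zero : SF A
  | one : SF A
  | atm : A → SF A → SF A → SF A
  | and : SF A → SF A → SF A
  | or : SF A → SF A → SF A

def SF.eval {A : Type} (v : A → Bool) : SF A → Bool
  | .zero => false
  | .one => true
  | .atm a F G => if v a then G.eval v else F.eval v
  | .and F G => F.eval v && G.eval v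
  | .or F G => F.eval v || G.eval v

/-- Left projection with respect to atom `a`. -/
def SF.lproj {A : Type} [DecidableEq A] (a : A) : SF A → SF A
  | .zero => .zero
  | .one => .one
  | .atm b F G => if b = a then F.lproj a else .atm b (F.lproj a) (G.lproj a)
  | .and F G => .and (F.lproj a) (G.lproj a)
  | .or F G => .or (F.lproj a) (G.lproj a)

/-- Right projection with respect to atom `a`. -/
def SF.rproj {A : Type} [DecidableEq A] (a : A) : SF A → SF A
  | .zero => .zero
  | .one => .one
  | .atm b F G => if b = a then G.rproj a else .atm b (F.rproj a) (G.rproj a)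
  | .and F G => .and (F.rproj a) (G.rproj a)
  | .or F G => .or (F.rproj a) (G.rproj a)

namespace SF

variable {A : Type} [DecidableEq A] {v : A → Bool} {a : A}

theorem eval_lproj (ha : v a = false) (F : SF A) : (F.lproj a).eval v = F.eval v := by
  induction F with
  | zero | one => rfl
  | atm b F G ihF ihG =>
    by_cases hb : b = a
    · subst hb
      simp [lproj, eval, ha, ihF]
    · simp [lproj, eval, hb, ihF, ihG]
  | and F G ihF ihG | or F G ihF ihG => simp [lproj, eval, ihF, ihG]

theorem eval_rproj (ha : v a = true) (F : SF A) : (F.rproj a).eval v = F.eval v := by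
  induction F with
  | zero | one => rfl
  | atm b F G ihF ihG =>
    by_cases hb : b = a
    · subst hb
      simp [rproj, eval, ha, ihG]
    · simp [rproj, eval, hb, ihF, ihG]
  | and F G ihF ihG | or F G ihF ihG => simp [rproj, eval, ihF, ihG]

end SF

theorem projection_correct {A : Type} [DecidableEq A] (v : A → Bool) (a : A) (F : SF A) :
    (v a = false → F.eval v = (F.lproj a).eval v) ∧
    (v a = true → F.eval v = (F.rproj a).eval v) :=
  ⟨fun ha => (SF.eval_lproj ha F).symm, fun ha => (SF.eval_rproj ha F).symm⟩
end

section
/- Generalized medial (merge) soundness: let A(x₁,…,xₙ) be a boolean function given by a formula built only from ∧ and ∨ in which each variable xᵢ occurs exactly once. Then for all booleans b₁,…,bₙ,c₁,…,cₙ, A(b₁,…,bₙ) ∨ A(c₁,…,cₙ) implies A(b₁ ∨ c₁, …, bₙ ∨ cₙ). -/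
inductive MF (V : Type) : Type
  | leaf : V → MF V
  | and : MF V → MF V → MF V
  | or : MF V → MF V → MF V

def MF.eval {V : Type} (v : V → Bool) : MF V → Bool
  | .leaf x => v x
  | .and F G => F.eval v && G.eval v
  | .or F G => F.eval v || G.eval v

/-- The list of variable occurrences of the formula. -/
def MF.vars {V : Type} : MF V → List V
  | .leaf x => [x]
  | .and F G => F.vars ++ G.vars
  | .or F G => F.vars ++ G.vars

/-- De Morgan dual: swap ∧ and ∨, keeping variables fixed. -/
def MF.dual {V : Type} : MF V → MF V
  | .leaf x => .leaf x
  | .and F G => .or F.dual G.dual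
  | .or F G => .and F.dual G.dual

/-- Replace every connective by ∧. -/
def MF.allAnd {V : Type} : MF V → MF V
  | .leaf x => .leaf x
  | .and F G => .and F.allAnd G.allAnd
  | .or F G => .and F.allAnd G.allAnd

/-- Replace every connective by ∨. -/
def MF.allOr {V : Type} : MF V → MF V
  | .leaf x => .leaf x
  | .and F G => .or F.allOr G.allOr
  | .or F G => .or F.allOr G.allOr

theorem MF.eval_monotone {V : Type} (A : MF V) : Monotone fun v : V → Bool => A.eval v := by
  intro v w hvw
  induction A with
  | leaf x => exact hvw x
  | and F G ihF ihG => exact inf_le_inf ihF ihG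
  | or F G ihF ihG => exact sup_le_sup ihF ihG

theorem generalized_medial_sound_general {V : Type} (A : MF V)
    (b c : V → Bool) (h : (A.eval b || A.eval c) = true) :
    A.eval (fun x => b x || c x) = true := by
  have hsup : A.eval b ⊔ A.eval c ≤ A.eval (b ⊔ c) :=
    sup_le (A.eval_monotone le_sup_left) (A.eval_monotone le_sup_right)
  exact top_le_iff.mp (h.symm.trans_le hsup)

theorem generalized_medial_sound {V : Type} (A : MF V) (hlin : A.vars.Nodup)
    (b c : V → Bool) (h : (A.eval b || A.eval c) = true) :
    A.eval (fun x => b x || c x) = true :=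
  generalized_medial_sound_general A b c h
end

section
/- Generalized identity (merge switch) soundness: let A be a formula built from binary ∧ and ∨ over variables x₁,…,xₙ, each occurring exactly once, let A^∧ be A with every connective replaced by ∧, and let Ā be the De Morgan dual of A (obtained by swapping ∧ and ∨). Then for all booleans b₁,…,bₙ,c₁,…,cₙ, A^∧(b₁ ∨ c₁, …, bₙ ∨ cₙ) implies A(b₁,…,bₙ) ∨ Ā(c₁,…,cₙ). -/
theorem Bool.or_and_or_imp_and_or_or {a a' d d' : Bool} (h : ((a || a') && (d || d')) = true) :
    ((a && d) || (a' || d')) = true := by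
  revert a a' d d'; decide

theorem Bool.or_and_or_imp_or_or_and {a a' d d' : Bool} (h : ((a || a') && (d || d')) = true) :
    ((a || d) || (a' && d')) = true := by
  revert a a' d d'; decide

/-- At every connective the two subformula disjunctions are recombined by one of the two
switch steps above, with the `b`-parts on the left and the `c`-parts on the right. -/
theorem MF.eval_or_dual_eval_of_allAnd {V : Type} (b c : V → Bool) :
    ∀ A : MF V, A.allAnd.eval (fun x => b x || c x) = true → (A.eval b || A.dual.eval c) = true
  | .leaf _, h => h
  | .and F G, h => by
    simp only [MF.allAnd, MF.eval, Bool.and_eq_true] at h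
    exact Bool.or_and_or_imp_and_or_or <| by
      simp [F.eval_or_dual_eval_of_allAnd b c h.1, G.eval_or_dual_eval_of_allAnd b c h.2]
  | .or F G, h => by
    simp only [MF.allAnd, MF.eval, Bool.and_eq_true] at h
    exact Bool.or_and_or_imp_or_or_and <| by
      simp [F.eval_or_dual_eval_of_allAnd b c h.1, G.eval_or_dual_eval_of_allAnd b c h.2]

theorem generalized_identity_sound_general {V : Type} (A : MF V)
    (b c : V → Bool) (h : A.allAnd.eval (fun x => b x || c x) = true) :
    (A.eval b || A.dual.eval c) = true :=
  A.eval_or_dual_eval_of_allAnd b c h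

theorem generalized_identity_sound {V : Type} (A : MF V) (hlin : A.vars.Nodup)
    (b c : V → Bool) (h : A.allAnd.eval (fun x => b x || c x) = true) :
    (A.eval b || A.dual.eval c) = true :=
  generalized_identity_sound_general A b c h
end

section
/- Generalized cut (merge switch) soundness: let A be a formula built from binary ∧ and ∨ over variables x₁,…,xₙ, each occurring exactly once, let A^∨ be A with every connective replaced by ∨, and let Ā be the De Morgan dual of A. Then for all booleans b₁,…,bₙ,c₁,…,cₙ, A(b₁,…,bₙ) ∧ Ā(c₁,…,cₙ) implies A^∨(b₁ ∧ c₁, …, bₙ ∧ cₙ). -/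
/-! At a conjunction `F ∧ G` the formula `A` makes both conjuncts true while its dual `F̄ ∨ Ḡ`
makes one of them true, so one of `F`, `G` is true under `b` with its dual true under `c`;
at a disjunction the roles are swapped. In either case induction on that subformula gives a
true disjunct of `A^∨` under `b ∧ c`. -/

theorem MF.eval_allOr_of_eval_of_eval_dual {V : Type} {b c : V → Bool} {A : MF V}
    (hb : A.eval b = true) (hc : A.dual.eval c = true) :
    A.allOr.eval (fun x => b x && c x) = true := by
  induction A with
  | leaf x => simp_all [MF.eval, MF.dual, MF.allOr]
  | and F G ihF ihG =>
    simp only [MF.eval, MF.dual, MF.allOr, Bool.and_eq_true, Bool.or_eq_true] at hb hc ⊢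
    rcases hc with hFc | hGc
    · exact Or.inl (ihF hb.1 hFc)
    · exact Or.inr (ihG hb.2 hGc)
  | or F G ihF ihG =>
    simp only [MF.eval, MF.dual, MF.allOr, Bool.and_eq_true, Bool.or_eq_true] at hb hc ⊢
    rcases hb with hFb | hGb
    · exact Or.inl (ihF hFb hc.1)
    · exact Or.inr (ihG hGb hc.2)

theorem generalized_cut_sound_general {V : Type} (A : MF V)
    (b c : V → Bool) (h : (A.eval b && A.dual.eval c) = true) :
    A.allOr.eval (fun x => b x && c x) = true := by
  rw [Bool.and_eq_true] at h
  exact MF.eval_allOr_of_eval_of_eval_dual h.1 h.2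

theorem generalized_cut_sound {V : Type} (A : MF V) (hlin : A.vars.Nodup)
    (b c : V → Bool) (h : (A.eval b && A.dual.eval c) = true) :
    A.allOr.eval (fun x => b x && c x) = true :=
  generalized_cut_sound_general A b c h
end
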